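/- arXiv:2306.03968 — 3 statements merged into one kernel-verified Lean document; each statement's English description precedes it below -/
import Mathlib

section
/- For a positive definite block matrix M = [[A, B], [Bᵀ, C]] (with A and C square diagonal blocks), det M ≤ det A · det C. -/
/-!
By the Schur complement formula, `det M = det C * det (A - B C⁻¹ Bᴴ)`. The Schur complement is
positive definite and differs from `A` by the positive semidefinite matrix `B C⁻¹ Bᴴ`, so it
suffices that `det` is monotone on positive definite matrices. Writing `P + Q = S (1 + R) S` with
`S = √P` and `R = S⁻¹ Q S⁻¹ ⪰ 0`, this reduces to `det (1 + R) ≥ 1`, which is clear after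
diagonalizing `R`.
-/

open Matrix
open scoped ComplexOrder MatrixOrder

namespace Matrix

variable {n : Type*} [Fintype n] [DecidableEq n] {𝕜 : Type*} [RCLike 𝕜]

theorem PosSemidef.one_le_det_one_add {R : Matrix n n 𝕜} (hR : R.PosSemidef) :
    1 ≤ (1 + R).det := by
  have hH := hR.isHermitian
  have h : 1 + R = Unitary.conjStarAlgAut 𝕜 _ hH.eigenvectorUnitary
      (1 + diagonal (RCLike.ofReal ∘ hH.eigenvalues)) := by
    rw [map_add, map_one, ← hH.spectral_theorem]
  rw [h, Unitary.conjStarAlgAut_apply, det_mul_comm, ← Matrix.mul_assoc,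
    UnitaryGroup.star_mul_self, Matrix.one_mul, ← diagonal_one, diagonal_add, det_diagonal]
  exact Finset.one_le_prod fun i _ ↦ le_add_of_nonneg_right <|
    RCLike.ofReal_nonneg.mpr (hR.eigenvalues_nonneg i)

theorem PosDef.det_le_det_add {P Q : Matrix n n 𝕜} (hP : P.PosDef) (hQ : Q.PosSemidef) :
    P.det ≤ (P + Q).det := by
  set S := CFC.sqrt P
  have hSS : S * S = P := CFC.sqrt_mul_sqrt_self P hP.posSemidef.nonneg
  have hSu : IsUnit S.det := (S.isUnit_iff_isUnit_det).mp <|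
    isUnit_of_mul_isUnit_left (hSS ▸ hP.isUnit)
  have hSinv : (S⁻¹)ᴴ = S⁻¹ := by
    rw [conjTranspose_nonsing_inv, (CFC.sqrt_nonneg P).posSemidef.isHermitian.eq]
  have hR : (S⁻¹ * Q * S⁻¹).PosSemidef := by
    simpa only [hSinv] using hQ.conjTranspose_mul_mul_same S⁻¹
  have hPQ : P + Q = S * (1 + S⁻¹ * Q * S⁻¹) * S := by
    rw [Matrix.mul_add, Matrix.add_mul, Matrix.mul_one, hSS, ← Matrix.mul_assoc,
      ← Matrix.mul_assoc, mul_nonsing_inv _ hSu, Matrix.one_mul,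
      Matrix.mul_assoc, nonsing_inv_mul _ hSu, Matrix.mul_one]
  calc P.det = P.det * 1 := (mul_one _).symm
    _ ≤ P.det * (1 + S⁻¹ * Q * S⁻¹).det :=
      mul_le_mul_of_nonneg_left hR.one_le_det_one_add hP.det_pos.le
    _ = (P + Q).det := by rw [hPQ, ← hSS, det_mul, det_mul, det_mul]; ring

theorem PosDef.det_fromBlocks_le {m : Type*} [Fintype m] [DecidableEq m] {A : Matrix m m 𝕜}
    {B : Matrix m n 𝕜} {C : Matrix n n 𝕜} (hM : (fromBlocks A B Bᴴ C).PosDef) :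
    (fromBlocks A B Bᴴ C).det ≤ A.det * C.det := by
  have hC : C.PosDef := hM.submatrix Sum.inr_injective
  let _ : Invertible C := hC.isUnit.invertible
  have hdet : (fromBlocks A B Bᴴ C).det = C.det * (A - B * C⁻¹ * Bᴴ).det := by
    rw [det_fromBlocks₂₂, invOf_eq_nonsing_inv]
  have hSchur : (A - B * C⁻¹ * Bᴴ).PosDef :=
    ((PosDef.fromBlocks₂₂ A B hC).mp hM.posSemidef).posDef_iff_det_ne_zero.mpr
      (right_ne_zero_of_mul (hdet ▸ hM.det_pos.ne'))
  calc (fromBlocks A B Bᴴ C).det = C.det * (A - B * C⁻¹ * Bᴴ).det := hdet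
    _ ≤ C.det * (A - B * C⁻¹ * Bᴴ + B * C⁻¹ * Bᴴ).det :=
      mul_le_mul_of_nonneg_left
        (hSchur.det_le_det_add (hC.posSemidef.inv.mul_mul_conjTranspose_same B))
        hC.det_pos.le
    _ = A.det * C.det := by rw [sub_add_cancel, mul_comm]

end Matrix

theorem fischer_inequality {k m : ℕ}
    (A : Matrix (Fin k) (Fin k) ℝ) (B : Matrix (Fin k) (Fin m) ℝ)
    (C : Matrix (Fin m) (Fin m) ℝ)
    (hM : (Matrix.fromBlocks A B Bᵀ C).PosDef) :
    (Matrix.fromBlocks A B Bᵀ C).det ≤ A.det * C.det := by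
  rw [← conjTranspose_eq_transpose_of_trivial] at hM ⊢
  exact hM.det_fromBlocks_le
end

section
/- If a partition P' of {1,...,n} refines a partition P, then for a positive definite matrix M, ∏_{s} det M_{P_s} ≤ ∏_{s'} det M_{P'_{s'}}; i.e., refining the partition gives a larger (looser) upper bound on det M. -/
/-!
Fischer's inequality: for a positive definite block matrix `N = [A B; Bᴴ D]`,
`det N = det A * det (D - Bᴴ A⁻¹ B) ≤ det A * det D`, because the determinant is monotone on
positive semidefinite matrices and `Bᴴ A⁻¹ B ⪰ 0`. Applied to disjoint unions of index sets and
iterated, it bounds the determinant of each block of `P` by the product of the determinants of the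
blocks of `P'` that partition it.
-/

open Matrix

/-- Principal submatrix of `M` indexed by the finite set `s`. -/
def principalSub {n : ℕ} (M : Matrix (Fin n) (Fin n) ℝ) (s : Finset (Fin n)) :
    Matrix {x // x ∈ s} {x // x ∈ s} ℝ :=
  M.submatrix (fun i => i.1) (fun j => j.1)

namespace Matrix

variable {m p : Type*} [Fintype m] [DecidableEq m] [Fintype p] [DecidableEq p]

lemma PosSemidef.one_le_det_one_add_s3 {Q : Matrix m m ℝ} (hQ : Q.PosSemidef) :
    1 ≤ (1 + Q).det := by
  have hQsa : IsSelfAdjoint Q := hQ.1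
  have h : cfc (fun x : ℝ => 1 + x) Q = 1 + Q := by
    rw [cfc_const_add (1 : ℝ) (fun x => x) Q, cfc_id' ℝ Q, map_one]
  rw [← h, hQ.1.cfc_eq]
  simp only [IsHermitian.cfc, RCLike.ofReal_real_eq_id, CompTriple.comp_eq, det_map, det_diagonal,
    Function.comp_apply]
  exact Finset.one_le_prod fun i _ => le_add_of_nonneg_right (hQ.eigenvalues_nonneg i)

open scoped MatrixOrder in
lemma PosSemidef.det_le_det_add {S T : Matrix m m ℝ} (hS : S.PosSemidef) (hT : T.PosSemidef) :
    S.det ≤ (S + T).det := by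
  by_cases hdet : S.det = 0
  · exact hdet ▸ (hS.add hT).det_nonneg
  have hSpd : S.PosDef := hS.posDef_iff_det_ne_zero.mpr hdet
  have hT₀ : 0 ≤ T := hT.nonneg
  -- `det (1 + XY) = det (1 + YX)` turns `det (1 + S⁻¹ √T √T)` into `det (1 + √T S⁻¹ √T)`,
  -- a positive semidefinite perturbation of the identity.
  have hfactor : S + T = S * (1 + S⁻¹ * CFC.sqrt T * CFC.sqrt T) := by
    rw [mul_assoc S⁻¹, CFC.sqrt_mul_sqrt_self T, mul_add, mul_one, ← mul_assoc,
      mul_nonsing_inv _ (isUnit_iff_ne_zero.mpr hdet), one_mul]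
  have hconj : (CFC.sqrt T * S⁻¹ * CFC.sqrt T).PosSemidef := by
    have := hSpd.inv.posSemidef.mul_mul_conjTranspose_same (CFC.sqrt T)
    rwa [(CFC.sqrt_nonneg T).posSemidef.1.eq] at this
  calc S.det = S.det * 1 := (mul_one _).symm
    _ ≤ S.det * (1 + CFC.sqrt T * S⁻¹ * CFC.sqrt T).det :=
      mul_le_mul_of_nonneg_left hconj.one_le_det_one_add_s3 hS.det_nonneg
    _ = (S + T).det := by
      rw [hfactor, det_mul, det_one_add_mul_comm (S⁻¹ * CFC.sqrt T), ← mul_assoc]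

theorem PosDef.det_fromBlocks_le_s3 {A : Matrix m m ℝ} {B : Matrix m p ℝ} {D : Matrix p p ℝ}
    (hN : (fromBlocks A B Bᴴ D).PosDef) :
    (fromBlocks A B Bᴴ D).det ≤ A.det * D.det := by
  have hA : A.PosDef := hN.submatrix Sum.inl_injective
  have : Invertible A := A.invertibleOfIsUnitDet hA.det_pos.ne'.isUnit
  have hschur : (D - Bᴴ * A⁻¹ * B).PosSemidef :=
    (PosDef.fromBlocks₁₁ B D hA).mp hN.posSemidef
  have hle : (D - Bᴴ * A⁻¹ * B).det ≤ D.det := by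
    simpa using hschur.det_le_det_add (hA.inv.posSemidef.conjTranspose_mul_mul_same B)
  rw [det_fromBlocks₁₁, invOf_eq_nonsing_inv]
  exact mul_le_mul_of_nonneg_left hle hA.det_pos.le

end Matrix

namespace Finpartition

variable {α : Type*} [DecidableEq α] {a : Finset α} {P Q : Finpartition a}

lemma sup_parts_filter_subset (h : P ≤ Q) {s : Finset α} (hs : s ∈ Q.parts) :
    {t ∈ P.parts | t ⊆ s}.sup id = s := by
  refine le_antisymm (Finset.sup_le fun t ht => (Finset.mem_filter.mp ht).2) fun x hx => ?_
  obtain ⟨t, ht, hxt⟩ := P.exists_mem (Q.subset hs hx)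
  obtain ⟨u, hu, htu⟩ := h ht
  have hts : t ⊆ s := Q.eq_of_mem_parts hu hs (htu hxt) hx ▸ htu
  exact Finset.mem_sup.mpr ⟨t, Finset.mem_filter.mpr ⟨ht, hts⟩, hxt⟩

lemma prod_parts_eq_prod_prod_filter_subset {β : Type*} [CommMonoid β] (h : P ≤ Q)
    (f : Finset α → β) :
    ∏ t ∈ P.parts, f t = ∏ s ∈ Q.parts, ∏ t ∈ P.parts with t ⊆ s, f t := by
  rw [← Finset.prod_biUnion]
  · congr 1
    ext t
    simp only [Finset.mem_biUnion, Finset.mem_filter]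
    exact ⟨fun ht => (h ht).imp fun s hs => ⟨hs.1, ht, hs.2⟩, fun ⟨_, _, ht, _⟩ => ht⟩
  · intro s hs s' hs' hne
    refine Finset.disjoint_filter.mpr fun t ht hts hts' => P.ne_empty ht ?_
    exact Finset.subset_empty.mp ((Q.disjoint hs hs' hne) hts hts')

end Finpartition

section PrincipalSub

variable {n : ℕ} {M : Matrix (Fin n) (Fin n) ℝ}

lemma principalSub_posDef (hM : M.PosDef) (s : Finset (Fin n)) : (principalSub M s).PosDef :=
  hM.submatrix Subtype.val_injective

lemma det_principalSub_union_le (hM : M.PosDef) {s t : Finset (Fin n)} (hst : Disjoint s t) :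
    (principalSub M (s ∪ t)).det ≤ (principalSub M s).det * (principalSub M t).det := by
  let e := Equiv.Finset.union s t hst
  let B : Matrix s t ℝ := M.submatrix (↑) (↑)
  have hblocks : (principalSub M (s ∪ t)).submatrix e e =
      fromBlocks (principalSub M s) B Bᴴ (principalSub M t) := by
    ext (i | j) (k | l) <;> simp [e, B, principalSub]
    simpa using hM.1.apply k j
  have hN : (fromBlocks (principalSub M s) B Bᴴ (principalSub M t)).PosDef :=
    hblocks ▸ (principalSub_posDef hM _).submatrix e.injective
  rw [← det_submatrix_equiv_self e, hblocks]
  exact hN.det_fromBlocks_le_s3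

lemma det_principalSub_sup_le (hM : M.PosDef) (F : Finset (Finset (Fin n)))
    (hF : (F : Set (Finset (Fin n))).PairwiseDisjoint id) :
    (principalSub M (F.sup id)).det ≤ ∏ s ∈ F, (principalSub M s).det := by
  induction F using Finset.cons_induction with
  | empty =>
    rw [Finset.sup_empty, Finset.prod_empty, Finset.bot_eq_empty, det_isEmpty]
  | cons s F hs ih =>
    rw [Finset.coe_cons, Set.pairwiseDisjoint_insert_of_notMem (by exact_mod_cast hs)] at hF
    have hdisj : Disjoint s (F.sup id) := Finset.disjoint_sup_right.mpr hF.2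
    rw [Finset.sup_cons, Finset.prod_cons]
    calc (principalSub M (s ∪ F.sup id)).det
        ≤ (principalSub M s).det * (principalSub M (F.sup id)).det :=
          det_principalSub_union_le hM hdisj
      _ ≤ (principalSub M s).det * ∏ u ∈ F, (principalSub M u).det :=
          mul_le_mul_of_nonneg_left (ih hF.1) (principalSub_posDef hM _).det_pos.le

end PrincipalSub

theorem refinement_looser_bound {n : ℕ} (M : Matrix (Fin n) (Fin n) ℝ) (hM : M.PosDef)
    (P P' : Finpartition (Finset.univ : Finset (Fin n)))
    (hrefine : ∀ s' ∈ P'.parts, ∃ s ∈ P.parts, s' ⊆ s) :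
    ∏ s ∈ P.parts, (principalSub M s).det ≤ ∏ s' ∈ P'.parts, (principalSub M s').det := by
  have hle : P' ≤ P := hrefine
  rw [P'.prod_parts_eq_prod_prod_filter_subset hle]
  refine Finset.prod_le_prod (fun s _ => (principalSub_posDef hM _).det_pos.le)
    fun s hs => ?_
  conv_lhs => rw [← P'.sup_parts_filter_subset hle hs]
  exact det_principalSub_sup_le hM _
    (P'.disjoint.subset (Finset.coe_subset.mpr (Finset.filter_subset (· ⊆ s) P'.parts)))
end

section
/- Let J ∈ ℝ^{m×p}, Λ ∈ ℝ^{m×m} positive semidefinite, P₀ ∈ ℝ^{p×p} positive definite. Then -log det(Jᵀ Λ J + P₀) ≥ -log det P₀ - log det(J P₀⁻¹ Jᵀ Λ + I_m), with equality; and if the row indices {1,...,m} are partitioned into blocks B₁,...,B_M with J_{B_j} the corresponding row-submatrices and Λ block-diagonal with blocks Λ_{B_j}, then -log det(Jᵀ Λ J + P₀) ≥ -log det P₀ - Σ_j log det(J_{B_j} P₀⁻¹ J_{B_j}ᵀ Λ_{B_j} + I). -/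
/-!
By the matrix determinant lemma, `det (Jᵀ Λ J + P₀) = det P₀ * det (J P₀⁻¹ Jᵀ Λ + 1)`; this is the
equality, and it turns each block term into `log det (P₀ + A_s) - log det P₀` with
`A_s = J_sᵀ Λ_s J_s`. Block diagonality of `Λ` gives `Jᵀ Λ J = ∑ s, A_s`, so the inequality is the
subadditivity of `A ↦ log det (P₀ + A) - log det P₀` on positive semidefinite matrices, i.e.
`det (X + A + C) * det X ≤ det (X + A) * det (X + C)`. Writing `C = S²`,
`det (Y + C) / det Y = det (1 + S Y⁻¹ S)` is antitone in `Y`, because inversion is operator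
antitone and `det` is monotone on positive definite matrices.
-/

open Matrix

/-- Rows of `J` indexed by the finite set `s`. -/
def rowSub {m p : ℕ} (J : Matrix (Fin m) (Fin p) ℝ) (s : Finset (Fin m)) :
    Matrix {x // x ∈ s} (Fin p) ℝ :=
  J.submatrix (fun i => i.1) id

theorem Finpartition.sum_sum_eq_sum_parts_sum_sum {α M : Type*} [Fintype α] [DecidableEq α]
    [AddCommMonoid M] (B : Finpartition (Finset.univ : Finset α)) (f : α → α → M)
    (hf : ∀ i j, (∀ s ∈ B.parts, i ∈ s → j ∉ s) → f i j = 0) :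
    ∑ i, ∑ j, f i j = ∑ s ∈ B.parts, ∑ i ∈ s, ∑ j ∈ s, f i j := by
  calc ∑ i, ∑ j, f i j = ∑ i ∈ B.parts.biUnion id, ∑ j, f i j := by rw [B.biUnion_parts]
    _ = ∑ s ∈ B.parts, ∑ i ∈ s, ∑ j, f i j := Finset.sum_biUnion B.supIndep.pairwiseDisjoint
    _ = _ := by
      refine Finset.sum_congr rfl fun s hs => Finset.sum_congr rfl fun i hi => ?_
      refine (Finset.sum_subset (Finset.subset_univ s) fun j _ hj => hf i j ?_).symm
      intro t ht hit
      rwa [B.eq_of_mem_parts ht hs hit hi]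

namespace Matrix

theorem transpose_mul_mul_apply {q n R : Type*} [Fintype q] [CommSemiring R]
    (X : Matrix q n R) (L : Matrix q q R) (a b : n) :
    (Xᵀ * L * X) a b = ∑ i, ∑ j, X i a * L i j * X j b := by
  simp only [mul_apply, transpose_apply, Finset.sum_mul, mul_assoc]
  exact Finset.sum_comm

theorem PosSemidef.transpose_mul_mul_same {q n : Type*} [Fintype q] [Finite n] {L : Matrix q q ℝ}
    (hL : L.PosSemidef) (X : Matrix q n ℝ) : (Xᵀ * L * X).PosSemidef := by
  simpa only [conjTranspose_eq_transpose_of_trivial] using hL.conjTranspose_mul_mul_same X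

variable {n : Type*} [Fintype n] [DecidableEq n]

theorem PosSemidef.one_le_det_one_add_s6 {E : Matrix n n ℝ} (hE : E.PosSemidef) :
    1 ≤ (1 + E).det := by
  have hH : (1 + E).IsHermitian := isHermitian_one.add hE.1
  rw [hH.det_eq_prod_eigenvalues]
  refine Finset.one_le_prod fun i _ => ?_
  have hv : star ⇑(hH.eigenvectorBasis i) ⬝ᵥ ⇑(hH.eigenvectorBasis i) = 1 := by
    rw [dotProduct_comm, ← EuclideanSpace.inner_eq_star_dotProduct, real_inner_self_eq_norm_sq,
      hH.eigenvectorBasis.orthonormal.1 i, one_pow]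
  rw [hH.eigenvalues_eq, add_mulVec, one_mulVec, dotProduct_add, map_add, hv]
  simpa using hE.re_dotProduct_nonneg (hH.eigenvectorBasis i)

open scoped MatrixOrder

theorem PosSemidef.sqrt_mul_mul_sqrt {M : Matrix n n ℝ} (hM : M.PosSemidef) (C : Matrix n n ℝ) :
    (CFC.sqrt C * M * CFC.sqrt C).PosSemidef := by
  simpa only [(CFC.sqrt_nonneg C).posSemidef.isHermitian.eq] using
    hM.conjTranspose_mul_mul_same (CFC.sqrt C)

theorem PosDef.det_add_eq_det_mul_det_one_add {Y C : Matrix n n ℝ} (hY : Y.PosDef)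
    (hC : C.PosSemidef) :
    (Y + C).det = Y.det * (1 + CFC.sqrt C * Y⁻¹ * CFC.sqrt C).det := by
  nth_rewrite 1 [← CFC.sqrt_mul_sqrt_self C hC.nonneg]
  exact det_add_mul _ _ hY.det_pos.ne'.isUnit

theorem PosDef.det_le_det_add_s6 {X D : Matrix n n ℝ} (hX : X.PosDef) (hD : D.PosSemidef) :
    X.det ≤ (X + D).det := by
  rw [hX.det_add_eq_det_mul_det_one_add hD]
  exact le_mul_of_one_le_right hX.det_pos.le
    (hX.inv.posSemidef.sqrt_mul_mul_sqrt D).one_le_det_one_add_s6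

theorem PosDef.inv_sub_inv_add_posSemidef {X A : Matrix n n ℝ} (hX : X.PosDef)
    (hA : A.PosSemidef) : (X⁻¹ - (X + A)⁻¹).PosSemidef := by
  set R := X + A with hR
  have hXu : IsUnit X.det := hX.det_pos.ne'.isUnit
  have hRpd : R.PosDef := hX.add_posSemidef hA
  have hRu : IsUnit R.det := hRpd.det_pos.ne'.isUnit
  -- `R X⁻¹ R - R = A + A X⁻¹ A`
  have key : X⁻¹ - R⁻¹ = R⁻¹ * (A + A * X⁻¹ * A) * R⁻¹ := by
    have hA' : A = R - X := by rw [hR]; abel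
    calc X⁻¹ - R⁻¹ = R⁻¹ * (R - X) * X⁻¹ := by
          rw [Matrix.mul_sub, Matrix.sub_mul, nonsing_inv_mul _ hRu, Matrix.one_mul,
            Matrix.mul_nonsing_inv_cancel_right _ _ hXu]
      _ = R⁻¹ * (A * X⁻¹ * R) * R⁻¹ := by
          rw [← hA']
          simp only [Matrix.mul_assoc, mul_nonsing_inv _ hRu, Matrix.mul_one]
      _ = R⁻¹ * (A + A * X⁻¹ * A) * R⁻¹ := by
          rw [Matrix.mul_add, Matrix.nonsing_inv_mul_cancel_right _ _ hXu]
  rw [key]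
  simpa only [hRpd.inv.isHermitian.eq, hA.isHermitian.eq] using
    (hA.add (hX.inv.posSemidef.conjTranspose_mul_mul_same A)).conjTranspose_mul_mul_same R⁻¹

theorem PosDef.det_add_add_mul_det_le {X A C : Matrix n n ℝ} (hX : X.PosDef)
    (hA : A.PosSemidef) (hC : C.PosSemidef) :
    (X + A + C).det * X.det ≤ (X + A).det * (X + C).det := by
  have hR : (X + A).PosDef := hX.add_posSemidef hA
  set S := CFC.sqrt C
  have hle : (1 + S * (X + A)⁻¹ * S).det ≤ (1 + S * X⁻¹ * S).det := by
    have hsplit : 1 + S * X⁻¹ * S = (1 + S * (X + A)⁻¹ * S) + S * (X⁻¹ - (X + A)⁻¹) * S := by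
      rw [Matrix.mul_sub, Matrix.sub_mul]
      abel
    rw [hsplit]
    exact (PosDef.one.add_posSemidef (hR.inv.posSemidef.sqrt_mul_mul_sqrt C)).det_le_det_add_s6
      ((hX.inv_sub_inv_add_posSemidef hA).sqrt_mul_mul_sqrt C)
  rw [hR.det_add_eq_det_mul_det_one_add hC, hX.det_add_eq_det_mul_det_one_add hC]
  calc (X + A).det * (1 + S * (X + A)⁻¹ * S).det * X.det
      = ((X + A).det * X.det) * (1 + S * (X + A)⁻¹ * S).det := by ring
    _ ≤ ((X + A).det * X.det) * (1 + S * X⁻¹ * S).det :=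
      mul_le_mul_of_nonneg_left hle (mul_pos hR.det_pos hX.det_pos).le
    _ = (X + A).det * (X.det * (1 + S * X⁻¹ * S).det) := by ring

theorem PosDef.log_det_add_sum_sub_le {ι : Type*} {X : Matrix n n ℝ} (hX : X.PosDef)
    (s : Finset ι) (A : ι → Matrix n n ℝ) (hA : ∀ i ∈ s, (A i).PosSemidef) :
    Real.log (X + ∑ i ∈ s, A i).det - Real.log X.det ≤
      ∑ i ∈ s, (Real.log (X + A i).det - Real.log X.det) := by
  refine Finset.le_sum_of_subadditive_on_pred (fun M => Real.log (X + M).det - Real.log X.det)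
    PosSemidef (by simp) (fun M N hM hN => ?_) (fun _ _ hM hN => hM.add hN) A hA
  have hXM := (hX.add_posSemidef hM).det_pos
  have hXN := (hX.add_posSemidef hN).det_pos
  have hXMN := ((hX.add_posSemidef hM).add_posSemidef hN).det_pos
  have hlog := Real.log_le_log (mul_pos hXMN hX.det_pos) (hX.det_add_add_mul_det_le hM hN)
  rw [Real.log_mul hXMN.ne' hX.det_pos.ne', Real.log_mul hXM.ne' hXN.ne'] at hlog
  rw [← add_assoc]
  linarith

theorem PosDef.log_det_mul_inv_mul_transpose_mul_add_one {q : Type*} [Fintype q] [DecidableEq q]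
    {P : Matrix n n ℝ} {L : Matrix q q ℝ} (hP : P.PosDef) (hL : L.PosSemidef) (X : Matrix q n ℝ) :
    Real.log (X * P⁻¹ * Xᵀ * L + 1).det = Real.log (P + Xᵀ * L * X).det - Real.log P.det := by
  have hdet : (P + Xᵀ * L * X).det = P.det * (X * P⁻¹ * Xᵀ * L + 1).det := by
    rw [det_add_mul _ _ hP.det_pos.ne'.isUnit, add_comm (1 : Matrix q q ℝ),
      Matrix.mul_assoc (X * P⁻¹)]
  have hpos := (hP.add_posSemidef (hL.transpose_mul_mul_same X)).det_pos
  rw [hdet] at hpos ⊢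
  rw [Real.log_mul hP.det_pos.ne' (pos_of_mul_pos_right hpos hP.det_pos.le).ne']
  ring

end Matrix

theorem transpose_mul_mul_eq_sum_parts {m p : ℕ}
    (J : Matrix (Fin m) (Fin p) ℝ) (Λ : Matrix (Fin m) (Fin m) ℝ)
    (B : Finpartition (Finset.univ : Finset (Fin m)))
    (hblock : ∀ i j : Fin m, (∀ s ∈ B.parts, i ∈ s → j ∉ s) → Λ i j = 0) :
    Jᵀ * Λ * J = ∑ s ∈ B.parts, (rowSub J s)ᵀ * principalSub Λ s * rowSub J s := by
  ext a b
  simp only [Matrix.sum_apply, transpose_mul_mul_apply, rowSub, principalSub, submatrix_apply, id]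
  rw [Finpartition.sum_sum_eq_sum_parts_sum_sum B _ fun i j hij => by simp [hblock i j hij]]
  refine Finset.sum_congr rfl fun s _ => ?_
  simp_rw [← Finset.sum_coe_sort s]

theorem data_subset_lower_bound {m p : ℕ}
    (J : Matrix (Fin m) (Fin p) ℝ) (Λ : Matrix (Fin m) (Fin m) ℝ)
    (P₀ : Matrix (Fin p) (Fin p) ℝ)
    (hΛ : Λ.PosSemidef) (hP : P₀.PosDef)
    (B : Finpartition (Finset.univ : Finset (Fin m)))
    (hblock : ∀ i j : Fin m, (∀ s ∈ B.parts, i ∈ s → j ∉ s) → Λ i j = 0) :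
    (-Real.log (Jᵀ * Λ * J + P₀).det =
        -Real.log P₀.det - Real.log (J * P₀⁻¹ * Jᵀ * Λ + 1).det) ∧
    -Real.log (Jᵀ * Λ * J + P₀).det ≥
      -Real.log P₀.det -
        ∑ s ∈ B.parts,
          Real.log ((rowSub J s * P₀⁻¹ * (rowSub J s)ᵀ * principalSub Λ s + 1).det) := by
  have hΛs (s : Finset (Fin m)) : (principalSub Λ s).PosSemidef := hΛ.submatrix _
  rw [add_comm _ P₀, hP.log_det_mul_inv_mul_transpose_mul_add_one hΛ J]
  refine ⟨by ring, ?_⟩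
  rw [Finset.sum_congr rfl fun s _ =>
      hP.log_det_mul_inv_mul_transpose_mul_add_one (hΛs s) (rowSub J s),
    transpose_mul_mul_eq_sum_parts J Λ B hblock]
  linarith [hP.log_det_add_sum_sub_le B.parts
    (fun s => (rowSub J s)ᵀ * principalSub Λ s * rowSub J s)
    fun s _ => (hΛs s).transpose_mul_mul_same _]
end
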